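/- Let ψ₁ be the modified stream function, i.e. an axially symmetric smooth solution of −ψ_{1,rr} − (3/r)ψ_{1,r} − ψ_{1,zz} = Γ in Ω with ψ₁ = 0 on S, where Γ is axially symmetric, smooth, and vanishes on S, and ψ₁ admits the expansion ψ₁ = d₁(z) + d₂(z)r² + … near the axis. Then there is a constant c > 0 such that ∫_Ω (ψ_{1,rrz}² + ψ_{1,rzz}² + ψ_{1,zzz}²) dx + ∫_{−a}^{a} ψ_{1,zz}²|_{r=0} dz + ∫_{−a}^{a} ψ_{1,rz}²|_{r=R} dz ≤ c |Γ_{,z}|²_{2,Ω}. -/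

import Mathlib

open MeasureTheory Real Set
open scoped ENNReal

noncomputable section

/-- The half-strip `(0,R) × (-a,a)` of `(r,z)` coordinates describing the cylinder
`Ω = {x ∈ ℝ³ : x₁² + x₂² < R², |x₃| < a}`. -/
def cylStrip (R a : ℝ) : Set (ℝ × ℝ) := Ioo 0 R ×ˢ Ioo (-a) a

/-- The measure on the `(r,z)` half-strip corresponding to Lebesgue measure on the
cylinder `Ω` for axially symmetric integrands: `dμ = 2π r dr dz`. -/
def cylMeas (R a : ℝ) : Measure (ℝ × ℝ) :=
  ((volume : Measure (ℝ × ℝ)).restrict (cylStrip R a)).withDensity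
    fun q => ENNReal.ofReal (2 * π * q.1)

/-- `∂_r` of a function of `(r,z)`. -/
def qdr (w : ℝ → ℝ → ℝ) : ℝ → ℝ → ℝ := fun r z => deriv (fun s => w s z) r
/-- `∂_z` of a function of `(r,z)`. -/
def qdz (w : ℝ → ℝ → ℝ) : ℝ → ℝ → ℝ := fun r z => deriv (fun s => w r s) z

/-- Hypotheses on the modified stream function `ψ₁` and the datum `Γ`:
smoothness, axial symmetry (built in: functions of `(r,z)`), the equation
`−ψ₁,rr − (3/r)ψ₁,r − ψ₁,zz = Γ` in `Ω`, `ψ₁ = 0` and `Γ = 0` on `S`, and the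
behaviour `ψ₁,r, ψ₁,rz, ψ₁,rzz = O(r)` near the axis coming from the expansion
`ψ₁ = d₁(z) + d₂(z) r² + …`. -/
structure ModStream (R a : ℝ) (ψ Γ : ℝ → ℝ → ℝ) : Prop where
  smooth_ψ : ∀ n : ℕ, ContDiff ℝ n (fun q : ℝ × ℝ => ψ q.1 q.2)
  smooth_Γ : ∀ n : ℕ, ContDiff ℝ n (fun q : ℝ × ℝ => Γ q.1 q.2)
  eqn : ∀ r z, (r, z) ∈ cylStrip R a →
    - qdr (qdr ψ) r z - (3 / r) * qdr ψ r z - qdz (qdz ψ) r z = Γ r z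
  ψ_lat : ∀ z ∈ Icc (-a) a, ψ R z = 0
  ψ_top : ∀ r ∈ Icc (0:ℝ) R, ψ r a = 0 ∧ ψ r (-a) = 0
  Γ_lat : ∀ z ∈ Icc (-a) a, Γ R z = 0
  Γ_top : ∀ r ∈ Icc (0:ℝ) R, Γ r a = 0 ∧ Γ r (-a) = 0
  axis : ∃ C : ℝ, ∀ r ∈ Ioo (0:ℝ) R, ∀ z ∈ Icc (-a) a,
    |qdr ψ r z| ≤ C * r ∧ |qdr (qdz ψ) r z| ≤ C * r ∧ |qdr (qdz (qdz ψ)) r z| ≤ C * r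

/-! Put `u = ψ₁,z`, `v = u,r`, `w = u,z`. Differentiating the equation in `z` gives
`−(u,rr + 3v/r + u,zz) = Γ,z`; moreover `w = ψ₁,zz = 0` on `S` and `v = 0` on the axis.
The estimate rests on the pointwise identity
`2πr (u,rr + 3v/r + u,zz)²`
`  = 2πr (u,rr² + u,rz² + u,zz²) + 2πr u,rz² + 18π v²/r + P,r + Q,z`
with `P = 6πv² − 4πw² − 4πr w,r w` and `Q = 4π(3v + r v,r) w`. Integrated over the
`(r, z)` rectangle, `Q` vanishes at `z = ±a`, while `P` contributes
`6π v² |_{r=R} + 4π w² |_{r=0}`; since `π > 1` the estimate holds with `c = 1`. -/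

open Function Filter Topology
open scoped ContDiff

section PartialDerivs

variable {w : ℝ → ℝ → ℝ}

lemma ContDiff.hasDerivAt_qdr (hw : ContDiff ℝ ∞ (uncurry w)) (r z : ℝ) :
    HasDerivAt (fun s => w s z) (qdr w r z) r :=
  ((hw.differentiable (by simp)).differentiableAt.comp r
    ((hasDerivAt_id r).prodMk (hasDerivAt_const r z)).differentiableAt).hasDerivAt

lemma ContDiff.hasDerivAt_qdz (hw : ContDiff ℝ ∞ (uncurry w)) (r z : ℝ) :
    HasDerivAt (w r) (qdz w r z) z :=
  ((hw.differentiable (by simp)).differentiableAt.comp z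
    ((hasDerivAt_const z r).prodMk (hasDerivAt_id z)).differentiableAt).hasDerivAt

lemma uncurry_qdr_eq_fderiv (hw : Differentiable ℝ (uncurry w)) :
    uncurry (qdr w) = fun q => fderiv ℝ (uncurry w) q (1, 0) := by
  ext ⟨r, z⟩
  exact ((hw (r, z)).hasFDerivAt.comp_hasDerivAt r
    ((hasDerivAt_id r).prodMk (hasDerivAt_const r z))).deriv

lemma uncurry_qdz_eq_fderiv (hw : Differentiable ℝ (uncurry w)) :
    uncurry (qdz w) = fun q => fderiv ℝ (uncurry w) q (0, 1) := by
  ext ⟨r, z⟩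
  exact ((hw (r, z)).hasFDerivAt.comp_hasDerivAt z
    ((hasDerivAt_const z r).prodMk (hasDerivAt_id z))).deriv

lemma ContDiff.uncurry_qdr (hw : ContDiff ℝ ∞ (uncurry w)) :
    ContDiff ℝ ∞ (uncurry (qdr w)) := by
  rw [uncurry_qdr_eq_fderiv (hw.differentiable (by simp))]
  exact (hw.fderiv_right (m := ∞) le_rfl).clm_apply contDiff_const

lemma ContDiff.uncurry_qdz (hw : ContDiff ℝ ∞ (uncurry w)) :
    ContDiff ℝ ∞ (uncurry (qdz w)) := by
  rw [uncurry_qdz_eq_fderiv (hw.differentiable (by simp))]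
  exact (hw.fderiv_right (m := ∞) le_rfl).clm_apply contDiff_const

lemma qdr_qdz_comm (hw : ContDiff ℝ ∞ (uncurry w)) : qdr (qdz w) = qdz (qdr w) := by
  have hd : Differentiable ℝ (uncurry w) := hw.differentiable (by simp)
  have hd2 : Differentiable ℝ (fderiv ℝ (uncurry w)) :=
    (hw.fderiv_right (m := ∞) le_rfl).differentiable (by simp)
  have second : ∀ v v' q, fderiv ℝ (fun p => fderiv ℝ (uncurry w) p v) q v'
      = fderiv ℝ (fderiv ℝ (uncurry w)) q v' v := fun v v' q => by
    rw [fderiv_clm_apply (hd2 q) (differentiableAt_const v)]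
    simp
  ext r z
  have h1 := congrFun (uncurry_qdr_eq_fderiv (hw.uncurry_qdz.differentiable (by simp))) (r, z)
  have h2 := congrFun (uncurry_qdz_eq_fderiv (hw.uncurry_qdr.differentiable (by simp))) (r, z)
  simp only [uncurry_apply_pair, uncurry_qdz_eq_fderiv hd, uncurry_qdr_eq_fderiv hd, second]
    at h1 h2
  rw [h1, h2]
  exact hw.contDiffAt.isSymmSndFDerivAt (by simpa using ENat.LEInfty.out) _ _

lemma qdr_eq_zero_of_isOpen {U : Set ℝ} (hU : IsOpen U) {z : ℝ} (h : ∀ s ∈ U, w s z = 0) :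
    ∀ r ∈ U, qdr w r z = 0 := fun r hr => by
  have hzero : (fun s => w s z) =ᶠ[𝓝 r] fun _ => 0 := eventuallyEq_of_mem (hU.mem_nhds hr) h
  rw [qdr, hzero.deriv_eq, deriv_const]

lemma qdz_eq_zero_of_isOpen {U : Set ℝ} (hU : IsOpen U) {r : ℝ} (h : ∀ t ∈ U, w r t = 0) :
    ∀ z ∈ U, qdz w r z = 0 := fun z hz => by
  have hzero : w r =ᶠ[𝓝 z] fun _ => 0 := eventuallyEq_of_mem (hU.mem_nhds hz) h
  rw [qdz, hzero.deriv_eq, deriv_const]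

end PartialDerivs

lemma Icc_subset_of_Ioo_subset {s : Set ℝ} (hs : IsClosed s) {c d : ℝ} (hcd : c < d)
    (h : Ioo c d ⊆ s) : Icc c d ⊆ s :=
  closure_Ioo hcd.ne ▸ hs.closure_subset_iff.2 h

section CylStrip

variable {R a : ℝ}

lemma integral_cylMeas (g : ℝ × ℝ → ℝ) :
    ∫ q, g q ∂(cylMeas R a) = ∫ q in cylStrip R a, 2 * π * q.1 * g q := by
  have hmeas : Measurable fun q : ℝ × ℝ => (2 * π * q.1).toNNReal := by fun_prop
  rw [cylMeas, show (fun q : ℝ × ℝ => ENNReal.ofReal (2 * π * q.1))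
      = fun q => ((2 * π * q.1).toNNReal : ℝ≥0∞) from rfl,
    integral_withDensity_eq_integral_smul hmeas]
  refine setIntegral_congr_fun (measurableSet_Ioo.prod measurableSet_Ioo) fun q hq => ?_
  have : 0 ≤ 2 * π * q.1 := by have := hq.1.1; positivity
  simp [NNReal.smul_def, Real.coe_toNNReal _ this]

lemma integrableOn_Ioo_prod_Ioo {g : ℝ × ℝ → ℝ} (hg : Continuous g) (b c d e : ℝ) :
    IntegrableOn g (Ioo b c ×ˢ Ioo d e) (volume.prod volume) :=
  (hg.continuousOn.integrableOn_compact (isCompact_Icc.prod isCompact_Icc)).mono_set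
    (prod_mono Ioo_subset_Icc_self Ioo_subset_Icc_self)

lemma integral_Ioo_eq_sub_of_hasDerivAt {f f' : ℝ → ℝ} {c d : ℝ} (hcd : c ≤ d)
    (hf : ∀ x, HasDerivAt f (f' x) x) (hf' : Continuous f') :
    ∫ x in Ioo c d, f' x = f d - f c := by
  rw [← integral_Ioc_eq_integral_Ioo, ← intervalIntegral.integral_of_le hcd,
    intervalIntegral.integral_eq_sub_of_hasDerivAt (fun x _ => hf x) (hf'.intervalIntegrable c d)]

lemma integral_cylStrip_of_hasDerivAt_fst (hR : 0 ≤ R) {f f' : ℝ → ℝ → ℝ}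
    (hf : ∀ r z, HasDerivAt (fun s => f s z) (f' r z) r) (hf' : Continuous (uncurry f')) :
    ∫ q in cylStrip R a, f' q.1 q.2 = ∫ z in Ioo (-a) a, (f R z - f 0 z) := by
  rw [cylStrip, Measure.volume_eq_prod, ← setIntegral_prod_swap]
  refine (setIntegral_prod (fun q => f' q.2 q.1)
    (integrableOn_Ioo_prod_Ioo (hf'.comp continuous_swap) _ _ _ _)).trans ?_
  refine setIntegral_congr_fun measurableSet_Ioo fun z _ => ?_
  exact integral_Ioo_eq_sub_of_hasDerivAt hR (fun r => hf r z) (hf'.uncurry_right z)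

lemma integral_cylStrip_of_hasDerivAt_snd (ha : 0 ≤ a) {g g' : ℝ → ℝ → ℝ}
    (hg : ∀ r z, HasDerivAt (g r) (g' r z) z) (hg' : Continuous (uncurry g')) :
    ∫ q in cylStrip R a, g' q.1 q.2 = ∫ r in Ioo 0 R, (g r a - g r (-a)) := by
  rw [cylStrip, Measure.volume_eq_prod]
  refine (setIntegral_prod (uncurry g') (integrableOn_Ioo_prod_Ioo hg' _ _ _ _)).trans ?_
  refine setIntegral_congr_fun measurableSet_Ioo fun r _ => ?_
  exact integral_Ioo_eq_sub_of_hasDerivAt (by linarith) (hg r) (hg'.uncurry_left r)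

lemma integral_cylStrip_add_flux_le (hR : 0 ≤ R) (ha : 0 ≤ a)
    {X Y P P' Q Q' : ℝ → ℝ → ℝ}
    (hX : Continuous (uncurry X)) (hY : Continuous (uncurry Y))
    (hP : ∀ r z, HasDerivAt (fun s => P s z) (P' r z) r) (hP' : Continuous (uncurry P'))
    (hQ : ∀ r z, HasDerivAt (Q r) (Q' r z) z) (hQ' : Continuous (uncurry Q'))
    (hle : ∀ q ∈ cylStrip R a, X q.1 q.2 + P' q.1 q.2 + Q' q.1 q.2 ≤ Y q.1 q.2) :
    (∫ q in cylStrip R a, X q.1 q.2) + (∫ z in Ioo (-a) a, (P R z - P 0 z))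
      + (∫ r in Ioo 0 R, (Q r a - Q r (-a))) ≤ ∫ q in cylStrip R a, Y q.1 q.2 := by
  have int : ∀ {g : ℝ × ℝ → ℝ}, Continuous g → IntegrableOn g (cylStrip R a) :=
    fun hg => Measure.volume_eq_prod ℝ ℝ ▸ integrableOn_Ioo_prod_Ioo hg _ _ _ _
  have iX : IntegrableOn (fun q : ℝ × ℝ => X q.1 q.2) (cylStrip R a) := int hX
  have iP : IntegrableOn (fun q : ℝ × ℝ => P' q.1 q.2) (cylStrip R a) := int hP'
  have iXP : IntegrableOn (fun q : ℝ × ℝ => X q.1 q.2 + P' q.1 q.2) (cylStrip R a) :=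
    iX.add iP
  have iQ : IntegrableOn (fun q : ℝ × ℝ => Q' q.1 q.2) (cylStrip R a) := int hQ'
  rw [← integral_cylStrip_of_hasDerivAt_fst hR hP hP',
    ← integral_cylStrip_of_hasDerivAt_snd ha hQ hQ', ← integral_add iX iP,
    ← integral_add iXP iQ]
  exact setIntegral_mono_on (iXP.add iQ) (int hY) (measurableSet_Ioo.prod measurableSet_Ioo) hle

end CylStrip

section Energy

variable {v w A B C D : ℝ → ℝ → ℝ}

lemma hasDerivAt_radialFlux (hv : ∀ r z, HasDerivAt (fun s => v s z) (A r z) r)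
    (hw : ∀ r z, HasDerivAt (fun s => w s z) (B r z) r)
    (hB : ∀ r z, HasDerivAt (fun s => B s z) (D r z) r) (r z : ℝ) :
    HasDerivAt (fun s => 6 * π * v s z ^ 2 - 4 * π * w s z ^ 2 - 4 * π * s * B s z * w s z)
      (12 * π * v r z * A r z - 12 * π * w r z * B r z - 4 * π * r * (D r z * w r z + B r z ^ 2))
      r := by
  refine (((((hv r z).fun_pow 2).const_mul (6 * π)).fun_sub
    (((hw r z).fun_pow 2).const_mul (4 * π))).fun_sub
    ((((hasDerivAt_id' r).const_mul (4 * π)).fun_mul (hB r z)).fun_mul (hw r z))).congr_deriv ?_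
  simp only [Nat.cast_ofNat]
  ring

lemma hasDerivAt_axialFlux (hv : ∀ r z, HasDerivAt (v r) (B r z) z)
    (hA : ∀ r z, HasDerivAt (A r) (D r z) z) (hw : ∀ r z, HasDerivAt (w r) (C r z) z)
    (r z : ℝ) :
    HasDerivAt (fun t => 4 * π * (3 * v r t + r * A r t) * w r t)
      (4 * π * ((3 * B r z + r * D r z) * w r z + (3 * v r z + r * A r z) * C r z)) z :=
  (((((hv r z).const_mul 3).fun_add ((hA r z).const_mul r)).const_mul (4 * π)).fun_mul
    (hw r z)).congr_deriv (by ring)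

lemma hessian_density_add_flux_le {r A B C D v w : ℝ} (hr : 0 < r) :
    2 * π * r * (A ^ 2 + B ^ 2 + C ^ 2)
        + (12 * π * v * A - 12 * π * w * B - 4 * π * r * (D * w + B ^ 2))
        + 4 * π * ((3 * B + r * D) * w + (3 * v + r * A) * C)
      ≤ 2 * π * r * (-A - 3 / r * v - C) ^ 2 := by
  have expand : 2 * π * r * (-A - 3 / r * v - C) ^ 2
      = 2 * π * r * (A ^ 2 + C ^ 2) + 12 * π * v * (A + C) + 4 * π * r * A * C
        + 18 * π * v ^ 2 / r := by
    field_simp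
    ring
  have : 0 ≤ 2 * π * r * B ^ 2 + 18 * π * v ^ 2 / r := by positivity
  nlinarith

end Energy

lemma integral_hessian_sq_add_boundary_le {R a : ℝ} (hR : 0 ≤ R) (ha : 0 ≤ a)
    {u f : ℝ → ℝ → ℝ} (hu : ContDiff ℝ ∞ (uncurry u)) (hf : Continuous (uncurry f))
    (heqn : ∀ r z, (r, z) ∈ cylStrip R a →
      - qdr (qdr u) r z - (3 / r) * qdr u r z - qdz (qdz u) r z = f r z)
    (h_axis : ∀ z ∈ Ioo (-a) a, qdr u 0 z = 0) (h_lat : ∀ z ∈ Ioo (-a) a, qdz u R z = 0)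
    (h_top : ∀ r ∈ Ioo 0 R, qdz u r a = 0 ∧ qdz u r (-a) = 0) :
    (∫ q in cylStrip R a, 2 * π * q.1 * ((qdr (qdr u) q.1 q.2) ^ 2
        + (qdr (qdz u) q.1 q.2) ^ 2 + (qdz (qdz u) q.1 q.2) ^ 2))
      + 6 * π * (∫ z in Ioo (-a) a, (qdr u R z) ^ 2)
      + 4 * π * (∫ z in Ioo (-a) a, (qdz u 0 z) ^ 2)
      ≤ ∫ q in cylStrip R a, 2 * π * q.1 * (f q.1 q.2) ^ 2 := by
  set v := qdr u
  set w := qdz u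
  set A := qdr v
  set B := qdr w
  set C := qdz w
  set D := qdr B
  have hv : ContDiff ℝ ∞ (uncurry v) := hu.uncurry_qdr
  have hw : ContDiff ℝ ∞ (uncurry w) := hu.uncurry_qdz
  have hA : ContDiff ℝ ∞ (uncurry A) := hv.uncurry_qdr
  have hB : ContDiff ℝ ∞ (uncurry B) := hw.uncurry_qdr
  have := hv.continuous; have := hw.continuous; have := hA.continuous
  have := hB.continuous; have := hw.uncurry_qdz.continuous; have := hB.uncurry_qdr.continuous
  have hvz : qdz v = B := (qdr_qdz_comm hu).symm
  have hAz : qdz A = D := by rw [← qdr_qdz_comm hv, hvz]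
  have key := integral_cylStrip_add_flux_le hR ha
    (X := fun r z => 2 * π * r * (A r z ^ 2 + B r z ^ 2 + C r z ^ 2))
    (Y := fun r z => 2 * π * r * f r z ^ 2) (by fun_prop) (by fun_prop)
    (hasDerivAt_radialFlux (A := A) (B := B) (D := D) hv.hasDerivAt_qdr hw.hasDerivAt_qdr
      hB.hasDerivAt_qdr) (by fun_prop)
    (hasDerivAt_axialFlux (C := C) (hvz ▸ hv.hasDerivAt_qdz) (hAz ▸ hA.hasDerivAt_qdz)
      hw.hasDerivAt_qdz) (by fun_prop)
    fun q hq => heqn q.1 q.2 hq ▸ hessian_density_add_flux_le hq.1.1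
  have int_Ioo : ∀ {g : ℝ → ℝ}, Continuous g → IntegrableOn g (Ioo (-a) a) := fun hg =>
    hg.integrableOn_Icc.mono_set Ioo_subset_Icc_self
  have lateral : ∫ z in Ioo (-a) a,
      ((6 * π * v R z ^ 2 - 4 * π * w R z ^ 2 - 4 * π * R * B R z * w R z)
        - (6 * π * v 0 z ^ 2 - 4 * π * w 0 z ^ 2 - 4 * π * 0 * B 0 z * w 0 z))
      = 6 * π * (∫ z in Ioo (-a) a, v R z ^ 2) + 4 * π * (∫ z in Ioo (-a) a, w 0 z ^ 2) := by
    rw [← integral_const_mul, ← integral_const_mul,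
      ← integral_add (int_Ioo (by fun_prop)) (int_Ioo (by fun_prop))]
    refine setIntegral_congr_fun measurableSet_Ioo fun z hz => ?_
    simp only [h_lat z hz, h_axis z hz]
    ring
  have top_bottom : ∫ r in Ioo 0 R,
      (4 * π * (3 * v r a + r * A r a) * w r a - 4 * π * (3 * v r (-a) + r * A r (-a)) * w r (-a))
      = 0 := by
    refine (setIntegral_congr_fun measurableSet_Ioo fun r hr => ?_).trans (integral_zero _ _)
    simp only [(h_top r hr).1, (h_top r hr).2]
    ring
  linarith

namespace ModStream

variable {R a : ℝ} {ψ Γ : ℝ → ℝ → ℝ}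

lemma contDiff_ψ (h : ModStream R a ψ Γ) : ContDiff ℝ ∞ (uncurry ψ) :=
  contDiff_infty.2 h.smooth_ψ

lemma contDiff_Γ (h : ModStream R a ψ Γ) : ContDiff ℝ ∞ (uncurry Γ) :=
  contDiff_infty.2 h.smooth_Γ

lemma qdz_qdz_lat (h : ModStream R a ψ Γ) : ∀ z ∈ Ioo (-a) a, qdz (qdz ψ) R z = 0 :=
  qdz_eq_zero_of_isOpen isOpen_Ioo <| qdz_eq_zero_of_isOpen isOpen_Ioo fun z hz =>
    h.ψ_lat z (Ioo_subset_Icc_self hz)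

lemma qdr_qdz_axis (h : ModStream R a ψ Γ) (hR : 0 < R) :
    ∀ z ∈ Icc (-a) a, qdr (qdz ψ) 0 z = 0 := by
  intro z hz
  obtain ⟨C, hC⟩ := h.axis
  have hcont : Continuous fun s => qdr (qdz ψ) s z :=
    h.contDiff_ψ.uncurry_qdz.uncurry_qdr.continuous.uncurry_right z
  have hle := Icc_subset_of_Ioo_subset (s := {s | |qdr (qdz ψ) s z| ≤ C * s})
    (isClosed_le (by fun_prop) (by fun_prop)) hR (fun s hs => (hC s hs z hz).2.1)
    (left_mem_Icc.2 hR.le)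
  simpa using hle

lemma qdz_qdz_top (h : ModStream R a ψ Γ) (ha : 0 < a) (r : ℝ) (hr : r ∈ Ioo 0 R) :
    qdz (qdz ψ) r a = 0 ∧ qdz (qdz ψ) r (-a) = 0 := by
  have hψ := h.contDiff_ψ
  have := hψ.uncurry_qdr.continuous; have := hψ.uncurry_qdr.uncurry_qdr.continuous
  have := hψ.uncurry_qdz.uncurry_qdz.continuous; have := h.contDiff_Γ.continuous
  have eqn_Icc : Icc (-a) a ⊆
      {t | - qdr (qdr ψ) r t - (3 / r) * qdr ψ r t - qdz (qdz ψ) r t = Γ r t} :=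
    Icc_subset_of_Ioo_subset (isClosed_eq (by fun_prop) (by fun_prop)) (by linarith)
      fun t ht => h.eqn r t ⟨hr, ht⟩
  -- on a lid `ψ₁ = 0` kills the tangential derivatives `ψ₁,r`, `ψ₁,rr`, and `Γ = 0`
  have ends : ∀ t ∈ Icc (-a) a, (∀ s ∈ Icc 0 R, ψ s t = 0) →
      (∀ s ∈ Icc 0 R, Γ s t = 0) → qdz (qdz ψ) r t = 0 := by
    intro t ht hψt hΓt
    have h1 := qdr_eq_zero_of_isOpen isOpen_Ioo fun s hs => hψt s (Ioo_subset_Icc_self hs)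
    have h2 := qdr_eq_zero_of_isOpen isOpen_Ioo h1
    have heq : - qdr (qdr ψ) r t - (3 / r) * qdr ψ r t - qdz (qdz ψ) r t = Γ r t := eqn_Icc ht
    rw [h1 r hr, h2 r hr, hΓt r (Ioo_subset_Icc_self hr)] at heq
    linarith
  exact ⟨ends a (right_mem_Icc.2 (by linarith)) (fun s hs => (h.ψ_top s hs).1)
      (fun s hs => (h.Γ_top s hs).1),
    ends (-a) (left_mem_Icc.2 (by linarith)) (fun s hs => (h.ψ_top s hs).2)
      (fun s hs => (h.Γ_top s hs).2)⟩

lemma qdz_eqn (h : ModStream R a ψ Γ) : ∀ r z, (r, z) ∈ cylStrip R a →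
    - qdr (qdr (qdz ψ)) r z - (3 / r) * qdr (qdz ψ) r z - qdz (qdz (qdz ψ)) r z
      = qdz Γ r z := by
  intro r z hq
  have hψ := h.contDiff_ψ
  have hΓ : Γ r =ᶠ[𝓝 z]
      fun t => - qdr (qdr ψ) r t - (3 / r) * qdr ψ r t - qdz (qdz ψ) r t :=
    eventuallyEq_of_mem (isOpen_Ioo.mem_nhds hq.2) fun t ht => (h.eqn r t ⟨hq.1, ht⟩).symm
  have hd := ((hψ.uncurry_qdr.uncurry_qdr.hasDerivAt_qdz r z).neg.sub
    ((hψ.uncurry_qdr.hasDerivAt_qdz r z).const_mul (3 / r))).sub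
    (hψ.uncurry_qdz.uncurry_qdz.hasDerivAt_qdz r z)
  rw [← qdr_qdz_comm hψ, ← qdr_qdz_comm hψ.uncurry_qdr, ← qdr_qdz_comm hψ] at hd
  exact ((h.contDiff_Γ.hasDerivAt_qdz r z).unique (hd.congr_of_eventuallyEq hΓ)).symm

end ModStream

/-- `H³` elliptic estimate for the modified stream function, Lemma 3.3:
there is `c > 0`, depending only on the cylinder, such that
`∫_Ω (ψ₁,rrz² + ψ₁,rzz² + ψ₁,zzz²) + ∫_{−a}^a ψ₁,zz²|_{r=0} dz + ∫_{−a}^a ψ₁,rz²|_{r=R} dz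
  ≤ c |Γ,z|²_{2,Ω}`. -/
theorem stmt_8 (R a : ℝ) (hR : 0 < R) (ha : 0 < a) :
    ∃ c > 0, ∀ ψ Γ : ℝ → ℝ → ℝ, ModStream R a ψ Γ →
      (∫ q, ((qdr (qdr (qdz ψ)) q.1 q.2) ^ 2 + (qdr (qdz (qdz ψ)) q.1 q.2) ^ 2
          + (qdz (qdz (qdz ψ)) q.1 q.2) ^ 2) ∂(cylMeas R a))
      + (∫ z in Ioo (-a) a, (qdz (qdz ψ) 0 z) ^ 2)
      + (∫ z in Ioo (-a) a, (qdr (qdz ψ) R z) ^ 2)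
      ≤ c * ∫ q, (qdz Γ q.1 q.2) ^ 2 ∂(cylMeas R a) := by
  refine ⟨1, one_pos, fun ψ Γ h => ?_⟩
  have key := integral_hessian_sq_add_boundary_le hR.le ha.le h.contDiff_ψ.uncurry_qdz
    h.contDiff_Γ.uncurry_qdz.continuous h.qdz_eqn
    (fun z hz => h.qdr_qdz_axis hR z (Ioo_subset_Icc_self hz)) h.qdz_qdz_lat (h.qdz_qdz_top ha)
  have hv : 0 ≤ ∫ z in Ioo (-a) a, (qdr (qdz ψ) R z) ^ 2 :=
    integral_nonneg fun _ => sq_nonneg _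
  have hw : 0 ≤ ∫ z in Ioo (-a) a, (qdz (qdz ψ) 0 z) ^ 2 :=
    integral_nonneg fun _ => sq_nonneg _
  rw [integral_cylMeas, integral_cylMeas, one_mul]
  nlinarith [pi_gt_three]
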